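/- Let A, B be accretive n×n complex matrices and ν a probability measure on [0,1]. Then, in the Loewner order, ℜ(∫₀¹ (A !_t B) dν(t)) ≥ ∫₀¹ ( ((ℜA) !_t (ℜB))^{-1} − 2·min{t,1−t}·( ((ℜA) ! (ℜB))^{-1} − (ℜ(A ! B))^{-1} ) )^{-1} dν(t) ≥ ∫₀¹ (ℜA) !_t (ℜB) dν(t), where the integrals are (entrywise/Bochner) integrals of the continuous matrix-valued integrands. -/

import Mathlib

open Matrix ComplexOrder MeasureTheory

/-- The real part `ℜA = (A + A^*)/2` of a square complex matrix. -/
noncomputable def reMat {n : ℕ} (A : Matrix (Fin n) (Fin n) ℂ) : Matrix (Fin n) (Fin n) ℂ :=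
  (1 / 2 : ℝ) • (A + Aᴴ)

/-- The weighted harmonic mean `A !_t B = ((1-t)A⁻¹ + tB⁻¹)⁻¹`. -/
noncomputable def harmMean {n : ℕ} (A B : Matrix (Fin n) (Fin n) ℂ) (t : ℝ) :
    Matrix (Fin n) (Fin n) ℂ :=
  ((1 - t) • A⁻¹ + t • B⁻¹)⁻¹

/-- Entrywise integral over `[0,1]` of a matrix-valued function, with respect to `ν`. -/
noncomputable def mInt {n : ℕ} (ν : Measure ℝ) (f : ℝ → Matrix (Fin n) (Fin n) ℂ) :
    Matrix (Fin n) (Fin n) ℂ :=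
  Matrix.of fun i j => ∫ t in Set.Icc (0 : ℝ) 1, f t i j ∂ν

/-!
Let `φ(t) = (ℜ(A !_t B))⁻¹`. With `Z(t) = (1 - t)A⁻¹ + tB⁻¹` one has `A !_t B = Z(t)⁻¹`, and
`ℜ(M⁻¹) = M⁻¹ (ℜM) M⁻ᴴ` gives `φ(t) = Z(t)ᴴ (ℜ Z(t))⁻¹ Z(t)`. Since `(H, X) ↦ Xᴴ H⁻¹ X` is jointly
convex and `t ↦ (ℜ Z(t), Z(t))` is affine, `φ` is matrix convex on `[0, 1]`, with `φ(0) = (ℜA)⁻¹`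
and `φ(1) = (ℜB)⁻¹`. So `φ` lies below its piecewise linear interpolant at `0, 1/2, 1`, which lies
below the chord `(1 - t)(ℜA)⁻¹ + t(ℜB)⁻¹ = ((ℜA) !_t (ℜB))⁻¹`. Inversion is antitone in the Loewner
order, which turns this into the two pointwise inequalities, and integration against `ν` preserves
them.
-/

open scoped MatrixOrder
open Set

namespace Matrix

variable {𝕜 m k : Type*} [RCLike 𝕜]

theorem PosDef.smul_add_smul {P Q : Matrix m m 𝕜} (hP : P.PosDef) (hQ : Q.PosDef) {a b : ℝ}
    (ha : 0 ≤ a) (hb : 0 ≤ b) (hab : a + b = 1) : (a • P + b • Q).PosDef := by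
  rcases ha.lt_or_eq with ha | rfl
  · exact (hP.smul ha).add_posSemidef (hQ.posSemidef.smul hb)
  · simpa [show b = 1 by linarith] using hQ

theorem convex_setOf_posDef : Convex ℝ {P : Matrix m m 𝕜 | P.PosDef} :=
  fun _ hP _ hQ _ _ ha hb hab => hP.smul_add_smul hQ ha hb hab

theorem PosDef.lineMap {P Q : Matrix m m 𝕜} (hP : P.PosDef) (hQ : Q.PosDef) {t : ℝ}
    (ht : t ∈ Icc (0 : ℝ) 1) : (AffineMap.lineMap P Q t).PosDef :=
  convex_setOf_posDef.lineMap_mem (s := {X : Matrix m m 𝕜 | X.PosDef}) hP hQ ht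

theorem PosDef.of_le {P Q : Matrix m m 𝕜} (hP : P.PosDef) (hPQ : P ≤ Q) : Q.PosDef := by
  simpa using hP.add_posSemidef hPQ

variable [Fintype m] [DecidableEq m]

/-- `Q - P` and `P⁻¹ - Q⁻¹` are the two Schur complements of `!![Q, 1; 1, P⁻¹]`. -/
theorem PosDef.inv_le_inv {P Q : Matrix m m 𝕜} (hP : P.PosDef) (hPQ : P ≤ Q) : Q⁻¹ ≤ P⁻¹ := by
  have hQ := hP.of_le hPQ
  have := hP.isUnit.invertible
  have := hQ.isUnit.invertible
  rw [le_iff] at hPQ ⊢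
  have hblock : (fromBlocks Q 1 (1 : Matrix m m 𝕜)ᴴ P⁻¹).PosSemidef :=
    (PosDef.fromBlocks₂₂ Q 1 hP.inv).2 (by simpa using hPQ)
  simpa using (PosDef.fromBlocks₁₁ 1 P⁻¹ hQ).1 hblock

theorem posSemidef_fromBlocks_conjTranspose_mul_inv_mul [Fintype k] {H : Matrix m m 𝕜}
    (hH : H.PosDef) (X : Matrix m k 𝕜) : (fromBlocks H X Xᴴ (Xᴴ * H⁻¹ * X)).PosSemidef := by
  have := hH.isUnit.invertible
  exact (PosDef.fromBlocks₁₁ X _ hH).2 (by simpa using PosSemidef.zero)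

/-- `Xᴴ H⁻¹ X ≤ Y` iff `!![H, X; Xᴴ, Y]` is positive semidefinite, a condition that is linear
in `(H, X, Y)`. -/
theorem convexOn_conjTranspose_mul_inv_mul [Fintype k] :
    ConvexOn ℝ {p : Matrix m m 𝕜 × Matrix m k 𝕜 | p.1.PosDef} (fun p => p.2ᴴ * p.1⁻¹ * p.2) := by
  refine ⟨(convex_setOf_posDef (𝕜 := 𝕜) (m := m)).linear_preimage
    (LinearMap.fst ℝ _ (Matrix m k 𝕜)), ?_⟩
  rintro ⟨H₀, X₀⟩ (h₀ : H₀.PosDef) ⟨H₁, X₁⟩ (h₁ : H₁.PosDef) a b ha hb hab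
  have hH := h₀.smul_add_smul h₁ ha hb hab
  have := hH.isUnit.invertible
  refine (PosDef.fromBlocks₁₁ (a • X₀ + b • X₁) _ hH).1 ?_
  have hblocks : fromBlocks (a • H₀ + b • H₁) (a • X₀ + b • X₁) (a • X₀ + b • X₁)ᴴ
      (a • (X₀ᴴ * H₀⁻¹ * X₀) + b • (X₁ᴴ * H₁⁻¹ * X₁)) =
      a • fromBlocks H₀ X₀ X₀ᴴ (X₀ᴴ * H₀⁻¹ * X₀) + b • fromBlocks H₁ X₁ X₁ᴴ (X₁ᴴ * H₁⁻¹ * X₁) := by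
    simp only [fromBlocks_smul, fromBlocks_add, conjTranspose_add, conjTranspose_smul, star_trivial]
  rw [hblocks]
  exact ((posSemidef_fromBlocks_conjTranspose_mul_inv_mul h₀ X₀).smul ha).add
    ((posSemidef_fromBlocks_conjTranspose_mul_inv_mul h₁ X₁).smul hb)

end Matrix

section

variable {β : Type*} [AddCommGroup β] [PartialOrder β] [Module ℝ β]

theorem ConvexOn.map_le_lineMap {f : ℝ → β} (hf : ConvexOn ℝ (Icc 0 1) f) {t : ℝ}
    (ht : t ∈ Icc (0 : ℝ) 1) : f t ≤ AffineMap.lineMap (f 0) (f 1) t := by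
  simpa [AffineMap.lineMap_apply_module] using
    hf.2 (left_mem_Icc.2 zero_le_one) (right_mem_Icc.2 zero_le_one) (sub_nonneg.2 ht.2) ht.1
      (sub_add_cancel 1 t)

/-- On `[0, 1/2]` and on `[1/2, 1]` the right-hand side is the chord of `f` through the midpoint,
so this is convexity of `f` on each half. -/
theorem ConvexOn.le_lineMap_sub_min_smul {f : ℝ → β} (hf : ConvexOn ℝ (Icc 0 1) f) {t : ℝ}
    (ht : t ∈ Icc 0 1) :
    f t ≤ AffineMap.lineMap (f 0) (f 1) t -
      (2 * min t (1 - t)) • (AffineMap.lineMap (f 0) (f 1) (1 / 2 : ℝ) - f (1 / 2)) := by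
  obtain ⟨ht0, ht1⟩ := ht
  have hmid : (1 / 2 : ℝ) ∈ Icc 0 1 := by norm_num
  simp only [AffineMap.lineMap_apply_module]
  rcases le_total t (1 / 2) with h | h
  · have := hf.2 (left_mem_Icc.2 zero_le_one) hmid (by linarith : 0 ≤ 1 - 2 * t)
      (by linarith : 0 ≤ 2 * t) (by ring)
    rw [min_eq_left (by linarith)]
    convert this using 1
    · congr 1; simp only [smul_eq_mul]; ring
    · module
  · have := hf.2 hmid (right_mem_Icc.2 zero_le_one) (by linarith : 0 ≤ 2 - 2 * t)
      (by linarith : 0 ≤ 2 * t - 1) (by ring)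
    rw [min_eq_right (by linarith)]
    convert this using 1
    · congr 1; simp only [smul_eq_mul]; ring
    · module

end

theorem ContinuousOn.matrix_inv {𝕜 m X : Type*} [RCLike 𝕜] [Fintype m] [DecidableEq m]
    [TopologicalSpace X] {f : X → Matrix m m 𝕜} {s : Set X} (hf : ContinuousOn f s)
    (h : ∀ x ∈ s, IsUnit (f x)) : ContinuousOn (fun x => (f x)⁻¹) s := fun x hx =>
  (continuousAt_matrix_inv (f x) (NormedRing.inverse_continuousAt
    ((isUnit_iff_isUnit_det _).1 (h x hx)).unit)).comp_continuousWithinAt (hf x hx)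

section Integral

variable {n : ℕ} (ν : Measure ℝ)

theorem mInt_congr {f g : ℝ → Matrix (Fin n) (Fin n) ℂ} (h : EqOn f g (Icc 0 1)) :
    mInt ν f = mInt ν g := by
  ext i j
  exact setIntegral_congr_fun measurableSet_Icc fun t ht => by rw [h ht]

theorem conjTranspose_mInt (f : ℝ → Matrix (Fin n) (Fin n) ℂ) :
    (mInt ν f)ᴴ = mInt ν fun t => (f t)ᴴ := by
  ext i j
  exact (integral_conj (f := fun t => f t j i)).symm

theorem mInt_smul (r : ℝ) (f : ℝ → Matrix (Fin n) (Fin n) ℂ) :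
    mInt ν (fun t => r • f t) = r • mInt ν f := by
  ext i j
  exact integral_smul r (fun t => f t i j)

variable {f g : ℝ → Matrix (Fin n) (Fin n) ℂ}

theorem mInt_add (hf : ∀ i j, IntegrableOn (fun t => f t i j) (Icc 0 1) ν)
    (hg : ∀ i j, IntegrableOn (fun t => g t i j) (Icc 0 1) ν) :
    mInt ν (fun t => f t + g t) = mInt ν f + mInt ν g := by
  ext i j
  exact integral_add (hf i j) (hg i j)

theorem mInt_sub (hf : ∀ i j, IntegrableOn (fun t => f t i j) (Icc 0 1) ν)
    (hg : ∀ i j, IntegrableOn (fun t => g t i j) (Icc 0 1) ν) :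
    mInt ν (fun t => f t - g t) = mInt ν f - mInt ν g := by
  ext i j
  exact integral_sub (hf i j) (hg i j)

theorem reMat_mInt (hf : ∀ i j, IntegrableOn (fun t => f t i j) (Icc 0 1) ν) :
    reMat (mInt ν f) = mInt ν fun t => reMat (f t) := by
  have hfH : ∀ i j, IntegrableOn (fun t => (f t)ᴴ i j) (Icc 0 1) ν := fun i j =>
    (Complex.conjCLE : ℂ →L[ℝ] ℂ).integrable_comp (hf j i)
  rw [reMat, conjTranspose_mInt, ← mInt_add ν hf hfH, ← mInt_smul]
  rfl

theorem dotProduct_mInt_mulVec (hf : ∀ i j, IntegrableOn (fun t => f t i j) (Icc 0 1) ν)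
    (x : Fin n → ℂ) :
    star x ⬝ᵥ (mInt ν f *ᵥ x) = ∫ t in Icc 0 1, star x ⬝ᵥ (f t *ᵥ x) ∂ν := by
  simp only [dotProduct, mulVec, mInt, of_apply, Finset.mul_sum]
  rw [integral_finsetSum _ fun i _ => integrable_finsetSum _ fun j _ =>
    ((hf i j).mul_const (x j)).const_mul (star x i)]
  refine Finset.sum_congr rfl fun i _ => ?_
  rw [integral_finsetSum _ fun j _ => ((hf i j).mul_const (x j)).const_mul (star x i)]
  refine Finset.sum_congr rfl fun j _ => ?_
  rw [integral_const_mul, integral_mul_const]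

theorem mInt_nonneg (hf : ∀ i j, IntegrableOn (fun t => f t i j) (Icc 0 1) ν)
    (hf0 : ∀ t ∈ Icc (0 : ℝ) 1, 0 ≤ f t) : 0 ≤ mInt ν f := by
  rw [nonneg_iff_posSemidef, posSemidef_iff_dotProduct_mulVec]
  refine ⟨?_, fun x => ?_⟩
  · rw [IsHermitian, conjTranspose_mInt]
    exact mInt_congr ν fun t ht => (hf0 t ht).posSemidef.isHermitian
  · rw [dotProduct_mInt_mulVec ν hf]
    exact integral_nonneg_of_ae <| (ae_restrict_iff' measurableSet_Icc).2 <|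
      ae_of_all _ fun t ht => (hf0 t ht).posSemidef.dotProduct_mulVec_nonneg x

theorem mInt_mono (hf : ∀ i j, IntegrableOn (fun t => f t i j) (Icc 0 1) ν)
    (hg : ∀ i j, IntegrableOn (fun t => g t i j) (Icc 0 1) ν)
    (hfg : ∀ t ∈ Icc (0 : ℝ) 1, f t ≤ g t) : mInt ν f ≤ mInt ν g := by
  rw [← sub_nonneg, ← mInt_sub ν hg hf]
  exact mInt_nonneg ν (fun i j => (hg i j).sub (hf i j)) fun t ht => sub_nonneg.2 (hfg t ht)

theorem integrableOn_entry_of_continuousOn [IsFiniteMeasure ν]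
    (hf : ContinuousOn f (Icc 0 1)) (i j : Fin n) :
    IntegrableOn (fun t => f t i j) (Icc 0 1) ν :=
  ((continuous_apply_apply i j).comp_continuousOn hf).integrableOn_compact isCompact_Icc

end Integral

section Accretive

variable {n : ℕ}

theorem reMat_add (X Y : Matrix (Fin n) (Fin n) ℂ) : reMat (X + Y) = reMat X + reMat Y := by
  simp only [reMat, conjTranspose_add]
  module

theorem reMat_smul (r : ℝ) (X : Matrix (Fin n) (Fin n) ℂ) : reMat (r • X) = r • reMat X := by
  simp only [reMat, conjTranspose_smul, star_trivial]
  module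

theorem reMat_lineMap (X Y : Matrix (Fin n) (Fin n) ℂ) (t : ℝ) :
    reMat (AffineMap.lineMap X Y t) = AffineMap.lineMap (reMat X) (reMat Y) t := by
  simp only [AffineMap.lineMap_apply_module, reMat_add, reMat_smul]

theorem continuous_reMat : Continuous (reMat : Matrix (Fin n) (Fin n) ℂ → _) := by
  unfold reMat
  fun_prop

theorem isUnit_of_posDef_reMat {M : Matrix (Fin n) (Fin n) ℂ} (h : (reMat M).PosDef) :
    IsUnit M := by
  rw [← mulVec_injective_iff_isUnit]
  refine (injective_iff_map_eq_zero M.mulVecLin).2 fun v (hv : M *ᵥ v = 0) => ?_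
  by_contra hne
  have hq : star v ⬝ᵥ (Mᴴ *ᵥ v) = 0 := by rw [dotProduct_mulVec, ← star_mulVec, hv]; simp
  have := h.dotProduct_mulVec_pos hne
  simp [reMat, smul_mulVec, add_mulVec, hv, hq] at this

theorem reMat_nonsing_inv {M : Matrix (Fin n) (Fin n) ℂ} (hM : IsUnit M) :
    reMat M⁻¹ = M⁻¹ * reMat M * M⁻¹ᴴ := by
  have := hM.invertible
  simp [reMat, Matrix.mul_add, Matrix.add_mul, conjTranspose_nonsing_inv, Matrix.mul_assoc,
    add_comm]

theorem posDef_reMat_nonsing_inv {M : Matrix (Fin n) (Fin n) ℂ} (h : (reMat M).PosDef) :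
    (reMat M⁻¹).PosDef := by
  have hM := isUnit_of_posDef_reMat h
  rw [reMat_nonsing_inv hM]
  exact (IsUnit.posDef_star_right_conjugate_iff (isUnit_nonsing_inv_iff.2 hM)).2 h

theorem inv_reMat_nonsing_inv {M : Matrix (Fin n) (Fin n) ℂ} (h : (reMat M).PosDef) :
    (reMat M⁻¹)⁻¹ = Mᴴ * (reMat M)⁻¹ * M := by
  have := (isUnit_of_posDef_reMat h).invertible
  rw [reMat_nonsing_inv (isUnit_of_posDef_reMat h)]
  simp [Matrix.mul_inv_rev, Matrix.mul_assoc, conjTranspose_nonsing_inv]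

end Accretive

section HarmonicMean

variable {n : ℕ} {A B : Matrix (Fin n) (Fin n) ℂ}

theorem harmMean_eq_inv_lineMap (A B : Matrix (Fin n) (Fin n) ℂ) (t : ℝ) :
    harmMean A B t = (AffineMap.lineMap A⁻¹ B⁻¹ t)⁻¹ := by
  rw [harmMean, AffineMap.lineMap_apply_module]

theorem continuousOn_harmMean {s : Set ℝ} (h : ∀ t ∈ s, IsUnit (AffineMap.lineMap A⁻¹ B⁻¹ t)) :
    ContinuousOn (harmMean A B) s := by
  simp only [funext (harmMean_eq_inv_lineMap A B)]
  exact AffineMap.lineMap_continuous.continuousOn.matrix_inv h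

theorem posDef_reMat_lineMap_inv (hA : (reMat A).PosDef) (hB : (reMat B).PosDef) {t : ℝ}
    (ht : t ∈ Icc (0 : ℝ) 1) : (reMat (AffineMap.lineMap A⁻¹ B⁻¹ t)).PosDef := by
  rw [reMat_lineMap]
  exact (posDef_reMat_nonsing_inv hA).lineMap (posDef_reMat_nonsing_inv hB) ht

theorem posDef_reMat_harmMean (hA : (reMat A).PosDef) (hB : (reMat B).PosDef) {t : ℝ}
    (ht : t ∈ Icc (0 : ℝ) 1) : (reMat (harmMean A B t)).PosDef := by
  rw [harmMean_eq_inv_lineMap]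
  exact posDef_reMat_nonsing_inv (posDef_reMat_lineMap_inv hA hB ht)

theorem harmMean_zero (B : Matrix (Fin n) (Fin n) ℂ) (hA : IsUnit A) : harmMean A B 0 = A := by
  have := hA.invertible
  simp [harmMean]

theorem harmMean_one (A : Matrix (Fin n) (Fin n) ℂ) (hB : IsUnit B) : harmMean A B 1 = B := by
  have := hB.invertible
  simp [harmMean]

noncomputable def reHarmMeanInv (A B : Matrix (Fin n) (Fin n) ℂ) (t : ℝ) :
    Matrix (Fin n) (Fin n) ℂ :=
  (reMat (harmMean A B t))⁻¹

theorem convexOn_reHarmMeanInv (hA : (reMat A).PosDef) (hB : (reMat B).PosDef) :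
    ConvexOn ℝ (Icc 0 1) (reHarmMeanInv A B) := by
  set g : ℝ →ᵃ[ℝ] Matrix (Fin n) (Fin n) ℂ × Matrix (Fin n) (Fin n) ℂ :=
    AffineMap.lineMap (reMat A⁻¹, A⁻¹) (reMat B⁻¹, B⁻¹)
  have hg : ∀ t, g t = (reMat (AffineMap.lineMap A⁻¹ B⁻¹ t), AffineMap.lineMap A⁻¹ B⁻¹ t) := by
    intro t
    simp only [g, AffineMap.lineMap_apply_module, reMat_add, reMat_smul, Prod.smul_mk,
      Prod.mk_add_mk]
  have hIcc : Icc 0 1 ⊆ g ⁻¹' {p | p.1.PosDef} := fun t ht => by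
    show (g t).1.PosDef
    rw [hg]
    exact posDef_reMat_lineMap_inv hA hB ht
  refine ((convexOn_conjTranspose_mul_inv_mul.comp_affineMap g).subset hIcc
    (convex_Icc 0 1)).congr fun t ht => ?_
  simp only [Function.comp_apply, hg, reHarmMeanInv, harmMean_eq_inv_lineMap,
    inv_reMat_nonsing_inv (posDef_reMat_lineMap_inv hA hB ht)]

theorem reHarmMeanInv_zero (hA : (reMat A).PosDef) : reHarmMeanInv A B 0 = (reMat A)⁻¹ := by
  rw [reHarmMeanInv, harmMean_zero B (isUnit_of_posDef_reMat hA)]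

theorem reHarmMeanInv_one (hB : (reMat B).PosDef) : reHarmMeanInv A B 1 = (reMat B)⁻¹ := by
  rw [reHarmMeanInv, harmMean_one A (isUnit_of_posDef_reMat hB)]

theorem inv_harmMean_reMat (hA : (reMat A).PosDef) (hB : (reMat B).PosDef) {t : ℝ}
    (ht : t ∈ Icc (0 : ℝ) 1) :
    (harmMean (reMat A) (reMat B) t)⁻¹ =
      AffineMap.lineMap (reHarmMeanInv A B 0) (reHarmMeanInv A B 1) t := by
  have := (hA.inv.lineMap hB.inv ht).isUnit.invertible
  rw [harmMean_eq_inv_lineMap, inv_inv_of_invertible, reHarmMeanInv_zero hA, reHarmMeanInv_one hB]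

end HarmonicMean

section Interpolant

variable {n : ℕ} {A B : Matrix (Fin n) (Fin n) ℂ}

/-- The piecewise linear interpolant of `reHarmMeanInv A B` at `0, 1/2, 1`. -/
noncomputable def reHarmMeanInvInterp (A B : Matrix (Fin n) (Fin n) ℂ) (t : ℝ) :
    Matrix (Fin n) (Fin n) ℂ :=
  (harmMean (reMat A) (reMat B) t)⁻¹ -
    (2 * min t (1 - t)) • ((harmMean (reMat A) (reMat B) (1 / 2))⁻¹ -
      (reMat (harmMean A B (1 / 2)))⁻¹)

theorem reHarmMeanInvInterp_eq (hA : (reMat A).PosDef) (hB : (reMat B).PosDef) {t : ℝ}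
    (ht : t ∈ Icc (0 : ℝ) 1) :
    reHarmMeanInvInterp A B t =
      AffineMap.lineMap (reHarmMeanInv A B 0) (reHarmMeanInv A B 1) t -
        (2 * min t (1 - t)) • (AffineMap.lineMap (reHarmMeanInv A B 0) (reHarmMeanInv A B 1)
          (1 / 2 : ℝ) - reHarmMeanInv A B (1 / 2)) := by
  rw [reHarmMeanInvInterp, inv_harmMean_reMat hA hB ht,
    inv_harmMean_reMat hA hB (by norm_num : (1 / 2 : ℝ) ∈ Icc (0 : ℝ) 1)]
  rfl

theorem reHarmMeanInv_le_interp (hA : (reMat A).PosDef) (hB : (reMat B).PosDef) {t : ℝ}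
    (ht : t ∈ Icc (0 : ℝ) 1) : reHarmMeanInv A B t ≤ reHarmMeanInvInterp A B t := by
  rw [reHarmMeanInvInterp_eq hA hB ht]
  exact (convexOn_reHarmMeanInv hA hB).le_lineMap_sub_min_smul ht

theorem reHarmMeanInvInterp_le (hA : (reMat A).PosDef) (hB : (reMat B).PosDef) {t : ℝ}
    (ht : t ∈ Icc (0 : ℝ) 1) :
    reHarmMeanInvInterp A B t ≤ (harmMean (reMat A) (reMat B) t)⁻¹ := by
  have hgap := sub_nonneg.2 ((convexOn_reHarmMeanInv hA hB).map_le_lineMap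
    (by norm_num : (1 / 2 : ℝ) ∈ Icc (0 : ℝ) 1))
  have hc : 0 ≤ 2 * min t (1 - t) := by have := le_min ht.1 (sub_nonneg.2 ht.2); positivity
  rw [reHarmMeanInvInterp_eq hA hB ht, inv_harmMean_reMat hA hB ht]
  exact sub_le_self _ (hgap.posSemidef.smul hc).nonneg

theorem posDef_reHarmMeanInvInterp (hA : (reMat A).PosDef) (hB : (reMat B).PosDef) {t : ℝ}
    (ht : t ∈ Icc (0 : ℝ) 1) : (reHarmMeanInvInterp A B t).PosDef :=
  (posDef_reMat_harmMean hA hB ht).inv.of_le (reHarmMeanInv_le_interp hA hB ht)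

theorem inv_reHarmMeanInvInterp_le_reMat_harmMean (hA : (reMat A).PosDef)
    (hB : (reMat B).PosDef) {t : ℝ} (ht : t ∈ Icc (0 : ℝ) 1) :
    (reHarmMeanInvInterp A B t)⁻¹ ≤ reMat (harmMean A B t) := by
  have := (posDef_reMat_harmMean hA hB ht).isUnit.invertible
  simpa [reHarmMeanInv] using
    (posDef_reMat_harmMean hA hB ht).inv.inv_le_inv (reHarmMeanInv_le_interp hA hB ht)

theorem harmMean_reMat_le_inv_reHarmMeanInvInterp (hA : (reMat A).PosDef)
    (hB : (reMat B).PosDef) {t : ℝ} (ht : t ∈ Icc (0 : ℝ) 1) :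
    harmMean (reMat A) (reMat B) t ≤ (reHarmMeanInvInterp A B t)⁻¹ := by
  have := (hA.inv.lineMap hB.inv ht).isUnit.invertible
  simpa [harmMean_eq_inv_lineMap] using
    (posDef_reHarmMeanInvInterp hA hB ht).inv_le_inv (reHarmMeanInvInterp_le hA hB ht)

theorem continuousOn_inv_reHarmMeanInvInterp (hA : (reMat A).PosDef) (hB : (reMat B).PosDef) :
    ContinuousOn (fun t => (reHarmMeanInvInterp A B t)⁻¹) (Icc 0 1) := by
  refine ContinuousOn.matrix_inv ?_ fun t ht => (posDef_reHarmMeanInvInterp hA hB ht).isUnit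
  refine ContinuousOn.congr ?_ fun t ht => reHarmMeanInvInterp_eq hA hB ht
  exact (AffineMap.lineMap_continuous.sub ((continuous_const.mul
    (continuous_id.min (continuous_const.sub continuous_id))).smul continuous_const)).continuousOn

end Interpolant

theorem stmt10_general (n : ℕ) (A B : Matrix (Fin n) (Fin n) ℂ)
    (hA : (reMat A).PosDef) (hB : (reMat B).PosDef)
    (ν : Measure ℝ) [IsProbabilityMeasure ν] :
    (reMat (mInt ν (fun t => harmMean A B t)) -
        mInt ν (fun t =>
          ((harmMean (reMat A) (reMat B) t)⁻¹ -
            (2 * min t (1 - t)) • ((harmMean (reMat A) (reMat B) (1 / 2))⁻¹ -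
              (reMat (harmMean A B (1 / 2)))⁻¹))⁻¹)).PosSemidef ∧
      (mInt ν (fun t =>
          ((harmMean (reMat A) (reMat B) t)⁻¹ -
            (2 * min t (1 - t)) • ((harmMean (reMat A) (reMat B) (1 / 2))⁻¹ -
              (reMat (harmMean A B (1 / 2)))⁻¹))⁻¹) -
        mInt ν (fun t => harmMean (reMat A) (reMat B) t)).PosSemidef := by
  have hcont : ContinuousOn (harmMean A B) (Icc 0 1) := continuousOn_harmMean fun t ht =>
    isUnit_of_posDef_reMat (posDef_reMat_lineMap_inv hA hB ht)
  have hcontRe : ContinuousOn (harmMean (reMat A) (reMat B)) (Icc 0 1) :=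
    continuousOn_harmMean fun t ht => (hA.inv.lineMap hB.inv ht).isUnit
  have hint := integrableOn_entry_of_continuousOn ν hcont
  have hintInterp := integrableOn_entry_of_continuousOn ν
    (continuousOn_inv_reHarmMeanInvInterp hA hB)
  constructor
  · rw [reMat_mInt ν hint]
    exact mInt_mono ν hintInterp
      (integrableOn_entry_of_continuousOn ν (continuous_reMat.comp_continuousOn hcont))
      fun t ht => inv_reHarmMeanInvInterp_le_reMat_harmMean hA hB ht
  · exact mInt_mono ν (integrableOn_entry_of_continuousOn ν hcontRe) hintInterp
      fun t ht => harmMean_reMat_le_inv_reHarmMeanInvInterp hA hB ht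

/-- For accretive `A, B` and a probability measure `ν` on `[0,1]`,
in the Loewner order:
`ℜ(∫₀¹ (A !_t B) dν) ≥ ∫₀¹ (((ℜA) !_t (ℜB))⁻¹ - 2 min{t,1-t} (((ℜA) ! (ℜB))⁻¹ -
(ℜ(A ! B))⁻¹))⁻¹ dν ≥ ∫₀¹ (ℜA) !_t (ℜB) dν`. -/
theorem stmt10 (n : ℕ) (A B : Matrix (Fin n) (Fin n) ℂ)
    (hA : (reMat A).PosDef) (hB : (reMat B).PosDef)
    (ν : Measure ℝ) [IsProbabilityMeasure ν] (hν : ν (Set.Icc (0 : ℝ) 1) = 1) :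
    (reMat (mInt ν (fun t => harmMean A B t)) -
        mInt ν (fun t =>
          ((harmMean (reMat A) (reMat B) t)⁻¹ -
            (2 * min t (1 - t)) • ((harmMean (reMat A) (reMat B) (1 / 2))⁻¹ -
              (reMat (harmMean A B (1 / 2)))⁻¹))⁻¹)).PosSemidef ∧
      (mInt ν (fun t =>
          ((harmMean (reMat A) (reMat B) t)⁻¹ -
            (2 * min t (1 - t)) • ((harmMean (reMat A) (reMat B) (1 / 2))⁻¹ -
              (reMat (harmMean A B (1 / 2)))⁻¹))⁻¹) -
        mInt ν (fun t => harmMean (reMat A) (reMat B) t)).PosSemidef :=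
  stmt10_general n A B hA hB ν
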